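/- arXiv:2504.12650 — 2 statements merged into one kernel-verified Lean document; each statement's English description precedes it below -/
import Mathlib

section
/- Let R₀ ∈ SO(n) and let Z be a real skew-symmetric n×n matrix such that I − ZᵀZ is positive definite. Define the correction term C = √(I − ZᵀZ) − I. Then R₀(I + Z + C) ∈ SO(n). -/
/-!
Write `B = √(I - ZᵀZ)`, so that `I + Z + C = B + Z`. For skew `Z` we have `ZᵀZ = -Z²`, which
commutes with `Z`, hence so does `B`; therefore `(B + Z)ᵀ(B + Z) = (B - Z)(B + Z) = B² - Z² = I`.
So `det (B + Z) = ±1`, and the sign is `+` because `det (B + tZ)` never vanishes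
(`xᵀ(B + tZ)x = xᵀBx > 0` for `x ≠ 0`) and is positive at `t = 0`.
-/

open Matrix

open scoped ComplexOrder in
/-- The square root of a positive semidefinite matrix, with the definition that
`Matrix.PosSemidef.sqrt` had in Mathlib (December 2024); it has since been removed. -/
noncomputable def Matrix.PosSemidef.sqrt {n 𝕜 : Type*} [Fintype n] [RCLike 𝕜] [DecidableEq n]
    {A : Matrix n n 𝕜} (hA : A.PosSemidef) : Matrix n n 𝕜 :=
  hA.1.eigenvectorUnitary.1 * diagonal ((↑) ∘ (√·) ∘ hA.1.eigenvalues) *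
    (star hA.1.eigenvectorUnitary : Matrix n n 𝕜)

open scoped MatrixOrder ComplexOrder

namespace Matrix

variable {ι : Type*} [Fintype ι]

section Sqrt

variable {𝕜 : Type*} [DecidableEq ι] [RCLike 𝕜] {A : Matrix ι ι 𝕜}

namespace PosSemidef

theorem sqrt_eq_cfcSqrt (hA : A.PosSemidef) : hA.sqrt = CFC.sqrt A := by
  rw [CFC.sqrt_eq_real_sqrt A hA.nonneg, cfcₙ_eq_cfc, hA.1.cfc_eq, IsHermitian.cfc,
    Unitary.conjStarAlgAut_apply]
  rfl

theorem sqrt_mul_sqrt (hA : A.PosSemidef) : hA.sqrt * hA.sqrt = A := by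
  rw [hA.sqrt_eq_cfcSqrt]
  exact CFC.sqrt_mul_sqrt_self A hA.nonneg

theorem posSemidef_sqrt (hA : A.PosSemidef) : hA.sqrt.PosSemidef := by
  rw [hA.sqrt_eq_cfcSqrt]
  exact (CFC.sqrt_nonneg A).posSemidef

theorem commute_sqrt (hA : A.PosSemidef) {B : Matrix ι ι 𝕜} (h : Commute B A) :
    Commute B hA.sqrt := by
  rw [hA.sqrt_eq_cfcSqrt, CFC.sqrt_eq_cfc]
  exact (h.symm.cfc_nnreal _).symm

end PosSemidef

theorem PosDef.posDef_sqrt (hA : A.PosDef) : hA.posSemidef.sqrt.PosDef := by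
  rw [hA.posSemidef.sqrt_eq_cfcSqrt]
  exact hA.isStrictlyPositive.sqrt.posDef

end Sqrt

theorem dotProduct_mulVec_self_eq_zero_of_transpose_eq_neg {R : Type*} [CommRing R]
    [IsAddTorsionFree R] {Z : Matrix ι ι R} (hZ : Zᵀ = -Z) (v : ι → R) :
    v ⬝ᵥ Z *ᵥ v = 0 := by
  refine self_eq_neg.mp ?_
  conv_lhs => rw [dotProduct_mulVec, ← mulVec_transpose, hZ, neg_mulVec, neg_dotProduct,
    dotProduct_comm]

theorem PosDef.det_add_ne_zero_of_transpose_eq_neg [DecidableEq ι] {B Z : Matrix ι ι ℝ}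
    (hB : B.PosDef) (hZ : Zᵀ = -Z) : (B + Z).det ≠ 0 := by
  intro hdet
  obtain ⟨v, hv, hBZv⟩ := exists_mulVec_eq_zero_iff.mpr hdet
  have hBv : v ⬝ᵥ B *ᵥ v = 0 := by
    simpa [add_mulVec, dotProduct_mulVec_self_eq_zero_of_transpose_eq_neg hZ] using
      congrArg (v ⬝ᵥ ·) hBZv
  simpa [hBv] using hB.dotProduct_mulVec_pos hv

theorem PosDef.det_add_pos_of_transpose_eq_neg [DecidableEq ι] {B Z : Matrix ι ι ℝ}
    (hB : B.PosDef) (hZ : Zᵀ = -Z) : 0 < (B + Z).det := by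
  set f : ℝ → ℝ := fun t ↦ (B + t • Z).det
  have hf : Continuous f := by fun_prop
  have hf_ne : ∀ t : ℝ, f t ≠ 0 := fun t ↦
    hB.det_add_ne_zero_of_transpose_eq_neg (by rw [transpose_smul, hZ, smul_neg])
  by_contra! h
  obtain ⟨t, -, ht⟩ := intermediate_value_Icc' zero_le_one hf.continuousOn
    ⟨by simpa [f] using h, by simpa [f] using hB.det_pos.le⟩
  exact hf_ne t ht

end Matrix

/-- Let `R₀ ∈ SO(n)` and let `Z` be a real skew-symmetric `n × n` matrix
such that `I - Zᵀ Z` is positive definite.  With the correction term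
`C = √(I - Zᵀ Z) - I` (where the square root is the unique positive (semi)definite square
root), the updated point `R₀ (I + Z + C)` again lies in `SO(n)`, i.e. it is orthogonal
with determinant one. -/
theorem stmt0 {n : ℕ} (R₀ Z C : Matrix (Fin n) (Fin n) ℝ)
    (hR₀ : R₀ᵀ * R₀ = 1) (hdetR₀ : R₀.det = 1)
    (hZ : Zᵀ = -Z) (hpd : (1 - Zᵀ * Z).PosDef)
    (hC : C = hpd.posSemidef.sqrt - 1) :
    (R₀ * (1 + Z + C))ᵀ * (R₀ * (1 + Z + C)) = 1 ∧ (R₀ * (1 + Z + C)).det = 1 := by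
  set B := hpd.posSemidef.sqrt
  have hBt : Bᵀ = B := by
    simpa [conjTranspose_eq_transpose_of_trivial] using
      hpd.posSemidef.posSemidef_sqrt.isHermitian.eq
  have hBB : B * B = 1 - Zᵀ * Z := hpd.posSemidef.sqrt_mul_sqrt
  have hZB : Commute Z B := hpd.posSemidef.commute_sqrt <| by
    rw [hZ, Commute, SemiconjBy]; noncomm_ring
  have hBZ_orth : (B + Z)ᵀ * (B + Z) = 1 := by
    rw [transpose_add, hBt, hZ]
    calc (B + -Z) * (B + Z) = B * B + B * Z - Z * B - Z * Z := by noncomm_ring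
      _ = 1 := by rw [hBB, hZB.eq, hZ]; noncomm_ring
  have hBZ_det : (B + Z).det = 1 := by
    have hsq := congrArg det hBZ_orth
    rw [det_mul, det_transpose, det_one] at hsq
    have hpos := hpd.posDef_sqrt.det_add_pos_of_transpose_eq_neg hZ
    nlinarith
  have hS : 1 + Z + C = B + Z := by rw [hC]; abel
  refine ⟨?_, ?_⟩
  · rw [hS, transpose_mul, mul_assoc, ← mul_assoc R₀ᵀ, hR₀, one_mul, hBZ_orth]
  · rw [hS, det_mul, hdetR₀, hBZ_det, one_mul]
end

section
/- Let Z be a real skew-symmetric n×n matrix. Then there exist an orthogonal n×n matrix P, a nonnegative integer l with 2l ≤ n, and real numbers λ₁, …, λ_l such that Z = P Θ Pᵀ, where Θ is the block-diagonal matrix diag(E(λ₁), …, E(λ_l), 0) whose leading 2×2 diagonal blocks are E(λᵢ) = [[0, λᵢ], [−λᵢ, 0]] and whose remaining (n − 2l)×(n − 2l) diagonal block is zero (real Schur canonical form of a skew-symmetric matrix). -/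
open Matrix

/-- The block-diagonal `n × n` matrix `diag(E(λ₁), …, E(λ_l), 0)`, where
`E(λ) = [[0, λ], [-λ, 0]]`: the `k`-th `2 × 2` block occupies rows/columns
`2k` and `2k + 1`, and all remaining entries vanish. -/
def skewBlockDiag (n l : ℕ) (lam : Fin l → ℝ) : Matrix (Fin n) (Fin n) ℝ :=
  Matrix.of fun i j =>
    if h : (j : ℕ) = (i : ℕ) + 1 ∧ (i : ℕ) % 2 = 0 ∧ (j : ℕ) < 2 * l then
      lam ⟨(i : ℕ) / 2, by omega⟩
    else if h' : (i : ℕ) = (j : ℕ) + 1 ∧ (j : ℕ) % 2 = 0 ∧ (i : ℕ) < 2 * l then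
      -lam ⟨(j : ℕ) / 2, by omega⟩
    else 0

/-!
Induction on `n`, splitting off one `2 × 2` block at a time. If `Z ≠ 0`, the positive
semidefinite matrix `Zᵀ Z = -Z²` has an eigenvalue `μ = a² > 0` with a unit eigenvector `u`.
Then `x = Z u / a` and `u` are orthonormal with `Z x = -a u` and `Z u = a x`, so the plane they
span is `Z`-invariant, and by skew-symmetry so is its orthogonal complement. Completing `x, u` to
an orthogonal matrix `P` gives `Pᵀ Z P = diag(E(a), D)` with `D` skew-symmetric of size `n - 2`.
-/

lemma skewBlockDiag_zero (n : ℕ) (lam : Fin 0 → ℝ) : skewBlockDiag n 0 lam = 0 := by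
  ext i j
  simp [skewBlockDiag]

lemma submatrix_skewBlockDiag_cons (m l : ℕ) (a : ℝ) (lam : Fin l → ℝ) :
    (skewBlockDiag (2 + m) (l + 1) (Fin.cons a lam)).submatrix finSumFinEquiv finSumFinEquiv =
      fromBlocks !![0, a; -a, 0] 0 0 (skewBlockDiag m l lam) := by
  have cons_succ (k : ℕ) (hk : k / 2 < l) (hk' : (2 + k) / 2 < l + 1) :
      (Fin.cons a lam : Fin (l + 1) → ℝ) ⟨(2 + k) / 2, hk'⟩ = lam ⟨k / 2, hk⟩ := by
    rw [← Fin.cons_succ (α := fun _ => ℝ) a lam]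
    congr 1
    ext
    simp only [Fin.val_succ]
    omega
  ext (i | i) (j | j)
  · fin_cases i <;> fin_cases j <;> simp [skewBlockDiag] <;> omega
  all_goals
    simp only [submatrix_apply, finSumFinEquiv_apply_left, finSumFinEquiv_apply_right,
      fromBlocks_apply₁₂, fromBlocks_apply₂₁, fromBlocks_apply₂₂, Matrix.zero_apply,
      skewBlockDiag, of_apply, Fin.val_castAdd, Fin.val_natAdd]
    split_ifs <;> first | omega | rw [cons_succ] | rfl

namespace Matrix

theorem eq_zero_of_transpose_eq_neg {ι R : Type*} [Subsingleton ι] [AddGroup R] [IsAddTorsionFree R]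
    {Z : Matrix ι ι R} (hZ : Zᵀ = -Z) : Z = 0 := by
  ext i j
  rw [Subsingleton.elim j i, zero_apply, ← self_eq_neg]
  exact congrFun₂ hZ i i

section CommRing

variable {R : Type*} [CommRing R] {m n κ : Type*}

theorem dotProduct_mulVec_eq_neg_of_transpose_eq_neg [Fintype n] {Z : Matrix n n R}
    (hZ : Zᵀ = -Z) (x y : n → R) : x ⬝ᵥ Z *ᵥ y = -(Z *ᵥ x ⬝ᵥ y) := by
  rw [dotProduct_mulVec, ← mulVec_transpose, hZ, neg_mulVec, neg_dotProduct]

theorem transpose_fromCols_mul_mul_fromCols [Fintype n] [Fintype m] [DecidableEq m]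
    [DecidableEq κ] {X : Matrix n m R} {Y : Matrix n κ R}
    (hXY : (fromCols X Y)ᵀ * fromCols X Y = 1) {Z : Matrix n n R} (hZ : Zᵀ = -Z)
    {E : Matrix m m R} (hZX : Z * X = X * E) :
    (fromCols X Y)ᵀ * Z * fromCols X Y = fromBlocks E 0 0 (Yᵀ * Z * Y) := by
  obtain ⟨hXX, hXY, hYX, -⟩ : Xᵀ * X = 1 ∧ Xᵀ * Y = 0 ∧ Yᵀ * X = 0 ∧ Yᵀ * Y = 1 := by
    rwa [transpose_fromCols, fromRows_mul_fromCols, ← fromBlocks_one, fromBlocks_inj] at hXY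
  have hXZ : Xᵀ * Z = -(Eᵀ * Xᵀ) := by
    rw [← neg_neg Z, ← hZ, Matrix.mul_neg, ← transpose_mul, hZX, transpose_mul]
  rw [transpose_fromCols, fromRows_mul, fromRows_mul_fromCols, Matrix.mul_assoc, hZX,
    ← Matrix.mul_assoc, hXX, hXZ, Matrix.neg_mul, Matrix.mul_assoc, hXY, Matrix.mul_assoc, hZX,
    ← Matrix.mul_assoc, hYX]
  simp

variable [Fintype n] [DecidableEq n]

def OrthogonallySimilar (A B : Matrix n n R) : Prop :=
  ∃ P ∈ orthogonalGroup n R, A = P * B * Pᵀ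

namespace OrthogonallySimilar

theorem refl (A : Matrix n n R) : OrthogonallySimilar A A :=
  ⟨1, one_mem _, by simp⟩

theorem trans {A B C : Matrix n n R} (hAB : OrthogonallySimilar A B)
    (hBC : OrthogonallySimilar B C) : OrthogonallySimilar A C := by
  obtain ⟨P, hP, rfl⟩ := hAB
  obtain ⟨Q, hQ, rfl⟩ := hBC
  exact ⟨P * Q, mul_mem hP hQ, by simp only [transpose_mul, Matrix.mul_assoc]⟩

theorem of_transpose_mul_mul (A : Matrix n n R) {P : Matrix n n R}
    (hP : P ∈ orthogonalGroup n R) : OrthogonallySimilar A (Pᵀ * A * P) := by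
  have hPPt := (mem_orthogonalGroup_iff _ _).mp hP
  refine ⟨P, hP, ?_⟩
  rw [← Matrix.mul_assoc, ← Matrix.mul_assoc, hPPt, Matrix.mul_assoc, hPPt, one_mul, mul_one]

theorem submatrix [Fintype m] [DecidableEq m] {A B : Matrix n n R}
    (h : OrthogonallySimilar A B) (e : m ≃ n) :
    OrthogonallySimilar (A.submatrix e e) (B.submatrix e e) := by
  obtain ⟨P, hP, rfl⟩ := h
  refine ⟨P.submatrix e e, ?_, ?_⟩
  · rw [mem_orthogonalGroup_iff, transpose_submatrix, submatrix_mul_equiv,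
      (mem_orthogonalGroup_iff _ _).mp hP, submatrix_one_equiv]
  · rw [transpose_submatrix, submatrix_mul_equiv, submatrix_mul_equiv]

theorem submatrix_iff [Fintype m] [DecidableEq m] {A B : Matrix n n R} (e : m ≃ n) :
    OrthogonallySimilar (A.submatrix e e) (B.submatrix e e) ↔ OrthogonallySimilar A B :=
  ⟨fun h => by simpa using h.submatrix e.symm, fun h => h.submatrix e⟩

theorem fromBlocks_zero [Fintype κ] [DecidableEq κ] {A A' : Matrix n n R} {D D' : Matrix κ κ R}
    (hA : OrthogonallySimilar A A') (hD : OrthogonallySimilar D D') :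
    OrthogonallySimilar (fromBlocks A 0 0 D) (fromBlocks A' 0 0 D') := by
  obtain ⟨P, hP, rfl⟩ := hA
  obtain ⟨Q, hQ, rfl⟩ := hD
  refine ⟨fromBlocks P 0 0 Q, ?_, ?_⟩
  · rw [mem_orthogonalGroup_iff, fromBlocks_transpose, fromBlocks_multiply,
      (mem_orthogonalGroup_iff _ _).mp hP, (mem_orthogonalGroup_iff _ _).mp hQ]
    simp
  · simp [fromBlocks_transpose, fromBlocks_multiply]

end OrthogonallySimilar

end CommRing

section Real

variable {ι κ : Type*} [Fintype ι] [DecidableEq ι] [Fintype κ] [DecidableEq κ]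

theorem exists_unit_mulVec_mulVec_eq_neg_smul_of_transpose_eq_neg {Z : Matrix ι ι ℝ}
    (hZ : Zᵀ = -Z) (hZ0 : Z ≠ 0) :
    ∃ μ : ℝ, 0 < μ ∧ ∃ u : ι → ℝ, u ⬝ᵥ u = 1 ∧ Z *ᵥ Z *ᵥ u = -μ • u := by
  have hS := isHermitian_conjTranspose_mul_self Z
  obtain ⟨j, hj⟩ : ∃ j, hS.eigenvalues j ≠ 0 := by
    by_contra! h
    exact hZ0 (conjTranspose_mul_self_eq_zero.mp (hS.eigenvalues_eq_zero_iff.mp (funext h)))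
  refine ⟨_, (eigenvalues_conjTranspose_mul_self_nonneg Z j).lt_of_ne' hj,
    hS.eigenvectorBasis j, ?_, ?_⟩
  · have := orthonormal_iff_ite.mp hS.eigenvectorBasis.orthonormal j j
    rwa [EuclideanSpace.inner_eq_star_dotProduct, if_pos rfl] at this
  · have hZZ (v : ι → ℝ) : Z *ᵥ Z *ᵥ v = -((Zᴴ * Z) *ᵥ v) := by
      rw [conjTranspose_eq_transpose_of_trivial, hZ, Matrix.neg_mul, neg_mulVec, neg_neg,
        mulVec_mulVec]
    rw [hZZ, hS.mulVec_eigenvectorBasis j, neg_smul]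

theorem exists_invariant_plane_of_transpose_eq_neg {Z : Matrix ι ι ℝ} (hZ : Zᵀ = -Z)
    (hZ0 : Z ≠ 0) :
    ∃ (a : ℝ) (X : Matrix ι (Fin 2) ℝ), Xᵀ * X = 1 ∧ Z * X = X * !![0, a; -a, 0] := by
  obtain ⟨μ, hμ, u, hu, hZZu⟩ := exists_unit_mulVec_mulVec_eq_neg_smul_of_transpose_eq_neg hZ hZ0
  have huZu : u ⬝ᵥ Z *ᵥ u = 0 := by
    rw [← self_eq_neg]
    nth_rewrite 1 [dotProduct_mulVec_eq_neg_of_transpose_eq_neg hZ, dotProduct_comm]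
    rfl
  set a := √μ
  have ha : 0 < a := Real.sqrt_pos.mpr hμ
  have hμa : μ = a * a := (Real.mul_self_sqrt hμ.le).symm
  set x := a⁻¹ • Z *ᵥ u
  have hZu : Z *ᵥ u = a • x := (smul_inv_smul₀ ha.ne' _).symm
  have hZx : Z *ᵥ x = -a • u := by
    rw [mulVec_smul, hZZu, smul_smul, hμa]
    congr 1
    field_simp
  have hux : u ⬝ᵥ x = 0 := by
    rw [dotProduct_smul, huZu, smul_zero]
  have hxx : x ⬝ᵥ x = 1 := by
    nth_rewrite 2 [show x = a⁻¹ • Z *ᵥ u from rfl]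
    rw [dotProduct_smul, dotProduct_mulVec_eq_neg_of_transpose_eq_neg hZ, hZx, smul_dotProduct,
      hu]
    simp [ha.ne']
  refine ⟨a, of fun i k => ![x, u] k i, ?_, ?_⟩
  · simp only [dotProduct] at hxx hux hu
    ext k l
    fin_cases k <;> fin_cases l <;> simp [mul_apply, hxx, hux, hu, mul_comm]
  · ext i k
    fin_cases k
    · simpa [mul_apply, mulVec, dotProduct, mul_comm] using congrFun hZx i
    · simpa [mul_apply, mulVec, dotProduct, mul_comm] using congrFun hZu i

theorem exists_fromCols_mem_orthogonalGroup {X : Matrix (ι ⊕ κ) ι ℝ} (hX : Xᵀ * X = 1) :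
    ∃ Y : Matrix (ι ⊕ κ) κ ℝ, fromCols X Y ∈ orthogonalGroup (ι ⊕ κ) ℝ := by
  let w : ι ⊕ κ → EuclideanSpace ℝ (ι ⊕ κ) := Sum.elim (fun i => WithLp.toLp 2 (Xᵀ i)) 0
  have hw : Orthonormal ℝ ((Set.range Sum.inl).domRestrict w) := by
    rw [orthonormal_iff_ite]
    rintro ⟨_, i, rfl⟩ ⟨_, j, rfl⟩
    simpa [w, EuclideanSpace.inner_eq_star_dotProduct, mul_apply, dotProduct, one_apply,
      mul_comm, Subtype.ext_iff] using congrFun₂ hX i j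
  obtain ⟨b, hb⟩ := hw.exists_orthonormalBasis_extension_of_card_eq (by simp)
  refine ⟨((EuclideanSpace.basisFun _ ℝ).toBasis.toMatrix b.toBasis).toCols₂, ?_⟩
  convert (EuclideanSpace.basisFun _ ℝ).toMatrix_orthonormalBasis_mem_orthogonal b
  ext r (i | i)
  · simp [Module.Basis.toMatrix_apply, hb (Sum.inl i) ⟨i, rfl⟩, w]
  · rfl

theorem exists_orthogonallySimilar_fromBlocks_of_transpose_eq_neg
    {Z : Matrix (Fin 2 ⊕ κ) (Fin 2 ⊕ κ) ℝ} (hZ : Zᵀ = -Z) (hZ0 : Z ≠ 0) :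
    ∃ (a : ℝ) (D : Matrix κ κ ℝ), Dᵀ = -D ∧
      OrthogonallySimilar Z (fromBlocks !![0, a; -a, 0] 0 0 D) := by
  obtain ⟨a, X, hX, hZX⟩ := exists_invariant_plane_of_transpose_eq_neg hZ hZ0
  obtain ⟨Y, hP⟩ := exists_fromCols_mem_orthogonalGroup hX
  refine ⟨a, Yᵀ * Z * Y, by simp [transpose_mul, hZ, Matrix.mul_assoc], ?_⟩
  rw [← transpose_fromCols_mul_mul_fromCols ((mem_orthogonalGroup_iff' _ _).mp hP) hZ hZX]
  exact .of_transpose_mul_mul Z hP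

end Real

end Matrix

theorem exists_orthogonallySimilar_skewBlockDiag (n : ℕ) (Z : Matrix (Fin n) (Fin n) ℝ)
    (hZ : Zᵀ = -Z) : ∃ l, 2 * l ≤ n ∧ ∃ lam, OrthogonallySimilar Z (skewBlockDiag n l lam) := by
  induction n using Nat.strong_induction_on with
  | _ n ih =>
  by_cases hZ0 : Z = 0
  · exact ⟨0, Nat.zero_le n, Fin.elim0, by rw [hZ0, skewBlockDiag_zero]; exact .refl 0⟩
  obtain ⟨m, rfl⟩ : ∃ m, n = 2 + m := by
    refine ⟨n - 2, ?_⟩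
    by_contra hn
    have : Subsingleton (Fin n) := Fin.subsingleton_iff_le_one.mpr (by omega)
    exact hZ0 (eq_zero_of_transpose_eq_neg hZ)
  let e : Fin 2 ⊕ Fin m ≃ Fin (2 + m) := finSumFinEquiv
  have hZe0 : Z.submatrix e e ≠ 0 := fun h => hZ0 (by
    simpa using congrArg (submatrix · e.symm e.symm) h)
  obtain ⟨a, D, hD, hZD⟩ := exists_orthogonallySimilar_fromBlocks_of_transpose_eq_neg
    (by rw [transpose_submatrix, hZ]; rfl) hZe0
  obtain ⟨l, hl, lam, hDΘ⟩ := ih m (by omega) D hD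
  refine ⟨l + 1, by omega, Fin.cons a lam, ?_⟩
  rw [← OrthogonallySimilar.submatrix_iff e, submatrix_skewBlockDiag_cons]
  exact hZD.trans (.fromBlocks_zero (.refl _) hDΘ)

/-- real Schur canonical form of a skew-symmetric matrix.
Every real skew-symmetric `n × n` matrix `Z` can be written as `Z = P Θ Pᵀ` with `P`
orthogonal and `Θ = diag(E(λ₁), …, E(λ_l), 0)` block diagonal, where `2l ≤ n`,
`λ₁, …, λ_l ∈ ℝ` and `E(λ) = [[0, λ], [-λ, 0]]`. -/
theorem stmt12 {n : ℕ} (Z : Matrix (Fin n) (Fin n) ℝ) (hZ : Zᵀ = -Z) :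
    ∃ (l : ℕ) (_ : 2 * l ≤ n) (lam : Fin l → ℝ) (P : Matrix (Fin n) (Fin n) ℝ),
      Pᵀ * P = 1 ∧ Z = P * skewBlockDiag n l lam * Pᵀ := by
  obtain ⟨l, hl, lam, P, hP, hZP⟩ := exists_orthogonallySimilar_skewBlockDiag n Z hZ
  exact ⟨l, hl, lam, P, (mem_orthogonalGroup_iff' _ _).mp hP, hZP⟩
end
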